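/- Assume GCH, let κ be a regular uncountable cardinal, and let s be a function defined on the ordinals below κ whose values are cardinals below κ. Then there exists a class sequence Γ = ⟨x_α : α ∈ ON⟩ (a function from ordinals to sets of ordinals) such that every x_α has cardinality less than κ, and for every cardinal γ ≥ κ and every ordinal α < κ with cf(γ) > s(α), every set x of ordinals below γ with |x| = s(α) occurs as x_β for some β < γ. -/

import Mathlib

/-!
Sort the ordinals into levels: those of cardinality below `κ` form level `κ`, those of
cardinality `ν ≥ κ` form level `ν⁺`. Level `μ` has at least `μ` members, all below `μ`, and by
GCH there are at most `μ` sets of ordinals bounded below `μ`; so on each level `μ`, `Γ` can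
enumerate every set of size `< κ` bounded below `μ`. A set `x ⊆ γ` with `|x| < cf γ` is bounded
by some `δ < γ`, hence enumerated on the level of `δ`, which is at most `γ`.
-/

open Cardinal Ordinal Set

universe u

def GCH : Prop := ∀ c : Cardinal.{u}, ℵ₀ ≤ c → (2 : Cardinal.{u}) ^ c = Order.succ c

theorem GCH.two_power_le_of_lt (gch : GCH.{u}) {c μ : Cardinal.{u}} (hμ : ℵ₀ ≤ μ) (h : c < μ) :
    2 ^ c ≤ μ := by
  rcases lt_or_ge c ℵ₀ with hc | hc
  · exact (power_lt_aleph0 natCast_lt_aleph0 hc).le.trans hμ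
  · exact (gch c hc).trans_le (Order.succ_le_of_lt h)

theorem GCH.mk_boundedSets_le (gch : GCH.{u}) {μ : Cardinal.{u}} (hμ : ℵ₀ ≤ μ) :
    #{x : Set Ordinal.{u} | ∃ δ < μ.ord, x ⊆ Iio δ} ≤ lift.{u + 1} μ := by
  have hunion : {x : Set Ordinal.{u} | ∃ δ < μ.ord, x ⊆ Iio δ} =
      ⋃ δ : Iio μ.ord, 𝒫 Iio δ.1 := by
    ext x
    simp
  have hpow : ∀ δ : Iio μ.ord, #(𝒫 Iio δ.1) ≤ lift.{u + 1} μ := by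
    rintro ⟨δ, hδ⟩
    rw [mk_powerset, Cardinal.mk_Iio_ordinal, ← lift_two.{u + 1, u}, ← lift_power, Cardinal.lift_le]
    exact gch.two_power_le_of_lt hμ (lt_ord.1 hδ)
  calc _ = #(⋃ δ : Iio μ.ord, 𝒫 Iio δ.1) := by rw [hunion]
    _ ≤ #(Iio μ.ord) * ⨆ δ : Iio μ.ord, #(𝒫 Iio δ.1) := mk_iUnion_le _
    _ ≤ lift.{u + 1} μ * lift.{u + 1} μ := by
      rw [Cardinal.mk_Iio_ordinal, card_ord]
      exact mul_le_mul_right (ciSup_le' hpow) _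
    _ = lift.{u + 1} μ := mul_eq_self (by simpa using hμ)

theorem lift_le_mk_Ico_ord {a b : Cardinal.{u}} (hab : a < b) (hb : ℵ₀ ≤ b) :
    lift.{u + 1} b ≤ #(Ico a.ord b.ord) := by
  by_contra! h
  have hsplit := (mk_union_le (Iio a.ord) (Ico a.ord b.ord)).trans_lt
    (add_lt_of_lt (by simpa using hb) (by simpa using hab) h)
  rw [Iio_union_Ico_eq_Iio (ord_le_ord.2 hab.le), Cardinal.mk_Iio_ordinal, card_ord] at hsplit
  exact hsplit.false

theorem exists_lt_subset_Iio_of_mk_lt_cof {s : Set Ordinal.{u}} {a : Ordinal.{u}}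
    (hs : s ⊆ Iio a) (ha : #s < lift.{u + 1} a.cof) : ∃ δ < a, s ⊆ Iio δ := by
  rw [lift_cof] at ha
  have hbdd : BddAbove ((· + 1) '' s) := by
    refine ⟨a, ?_⟩
    rintro _ ⟨i, hi, rfl⟩
    exact Order.add_one_le_of_lt (hs hi)
  refine ⟨_, sSup_add_one_lt_of_lt_cof ha hs, fun i hi => ?_⟩
  exact (Order.lt_add_one_iff.2 le_rfl).trans_le (le_csSup hbdd ⟨i, hi, rfl⟩)

theorem exists_mapsTo_surjOn_fiber {α β : Type u} {ι : Type*} (L : α → ι) (W : ι → Set β)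
    (hne : ∀ i ∈ range L, (W i).Nonempty) (hcard : ∀ i ∈ range L, #(W i) ≤ #(L ⁻¹' {i})) :
    ∃ Γ : α → β, ∀ i ∈ range L, MapsTo Γ (L ⁻¹' {i}) (W i) ∧ SurjOn Γ (L ⁻¹' {i}) (W i) := by
  have hsurj : ∀ i ∈ range L, ∃ g : L ⁻¹' {i} → W i, Function.Surjective g := fun i hi =>
    Function.exists_surjective_iff.2
      ⟨⟨fun _ => ⟨_, (hne i hi).some_mem⟩⟩, (le_def _ _).1 (hcard i hi)⟩
  choose g hg using hsurj
  refine ⟨fun a => g (L a) (mem_range_self a) ⟨a, rfl⟩, fun i hi => ⟨?_, ?_⟩⟩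
  · rintro a rfl
    exact Subtype.prop _
  · intro x hx
    obtain ⟨⟨a, rfl⟩, hgx⟩ := hg i hi ⟨x, hx⟩
    exact ⟨a, rfl, congrArg Subtype.val hgx⟩

noncomputable def level (κ : Cardinal.{u}) (β : Ordinal.{u}) : Cardinal.{u} :=
  max κ (Order.succ β.card)

theorem lt_ord_level (κ : Cardinal.{u}) (β : Ordinal.{u}) : β < (level κ β).ord :=
  lt_ord.2 ((Order.lt_succ _).trans_le le_sup_right)

theorem level_le {κ γ : Cardinal.{u}} {δ : Ordinal.{u}} (hκγ : κ ≤ γ) (hδ : δ < γ.ord) :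
    level κ δ ≤ γ :=
  max_le hκγ (Order.succ_le_of_lt (lt_ord.1 hδ))

theorem Ico_subset_level_preimage (κ : Cardinal.{u}) (δ : Ordinal.{u}) :
    Ico δ.card.ord (level κ δ).ord ⊆ level κ ⁻¹' {level κ δ} := by
  rintro β ⟨hδβ, hβ⟩
  refine le_antisymm (max_le le_sup_left (Order.succ_le_of_lt (lt_ord.1 hβ))) ?_
  exact max_le_max le_rfl (Order.succ_le_succ (ord_le.1 hδβ))

theorem lift_level_le_mk_preimage {κ : Cardinal.{u}} (hκ : ℵ₀ ≤ κ) (δ : Ordinal.{u}) :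
    lift.{u + 1} (level κ δ) ≤ #(level κ ⁻¹' {level κ δ}) :=
  (lift_le_mk_Ico_ord ((Order.lt_succ _).trans_le le_sup_right) (hκ.trans le_sup_left)).trans
    (mk_le_mk_of_subset (Ico_subset_level_preimage κ δ))

theorem statement2_general
    (gch : ∀ c : Cardinal.{0}, ℵ₀ ≤ c → (2 : Cardinal.{0}) ^ c = Order.succ c)
    (κ : Cardinal.{0}) (hunc : ℵ₀ < κ)
    (s : Ordinal.{0} → Cardinal.{0}) (hs : ∀ α < κ.ord, s α < κ) :
    ∃ Γ : Ordinal.{0} → Set Ordinal.{0},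
      (∀ α : Ordinal.{0}, #(Γ α) < Cardinal.lift.{1} κ) ∧
      ∀ γ : Cardinal.{0}, κ ≤ γ →
        ∀ α : Ordinal.{0}, α < κ.ord → s α < γ.ord.cof →
          ∀ x : Set Ordinal.{0}, x ⊆ Set.Iio γ.ord →
            #x = Cardinal.lift.{1} (s α) →
            ∃ β : Ordinal.{0}, β < γ.ord ∧ Γ β = x := by
  set W : Cardinal.{0} → Set (Set Ordinal.{0}) :=
    fun μ => {x | #x < lift.{1} κ ∧ ∃ δ < μ.ord, x ⊆ Iio δ}
  have hW_nonempty : ∀ μ ∈ range (level κ), (W μ).Nonempty := by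
    rintro _ ⟨β, rfl⟩
    exact ⟨∅, by simpa using hunc.le.trans_lt' aleph0_pos,
      0, zero_le.trans_lt (lt_ord_level κ β), empty_subset _⟩
  have hW_card : ∀ μ ∈ range (level κ), #(W μ) ≤ #(level κ ⁻¹' {μ}) := by
    rintro _ ⟨β, rfl⟩
    calc #(W (level κ β)) ≤ #{x : Set Ordinal.{0} | ∃ δ < (level κ β).ord, x ⊆ Iio δ} :=
          mk_le_mk_of_subset fun x hx => hx.2
      _ ≤ lift.{1} (level κ β) := GCH.mk_boundedSets_le gch (hunc.le.trans le_sup_left)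
      _ ≤ #(level κ ⁻¹' {level κ β}) := lift_level_le_mk_preimage hunc.le β
  obtain ⟨Γ, hΓ⟩ := exists_mapsTo_surjOn_fiber (level κ) W hW_nonempty hW_card
  refine ⟨Γ, fun β => ((hΓ _ (mem_range_self β)).1 rfl).1, ?_⟩
  intro γ hκγ α hα hcof x hx hxcard
  obtain ⟨δ, hδγ, hxδ⟩ := exists_lt_subset_Iio_of_mk_lt_cof hx
    (by rw [hxcard]; exact lift_lt.2 hcof)
  obtain ⟨β, hβ, rfl⟩ := (hΓ _ (mem_range_self δ)).2
    ⟨by rw [hxcard]; exact lift_lt.2 (hs α hα), δ, lt_ord_level κ δ, hxδ⟩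
  refine ⟨β, (lt_ord_level κ β).trans_le ?_, rfl⟩
  rw [show level κ β = level κ δ from hβ]
  exact ord_le_ord.2 (level_le hκγ hδγ)

/-- Assume GCH, let κ be a regular uncountable cardinal, and let s assign to each
ordinal below κ a cardinal below κ. Then there is a class sequence Γ of sets of
ordinals, each of cardinality < κ, such that for every cardinal γ ≥ κ and every
α < κ with cf(γ) > s(α), every set of ordinals below γ of cardinality exactly s(α)
occurs as x_β for some β < γ. -/
theorem statement2
    (gch : ∀ c : Cardinal.{0}, ℵ₀ ≤ c → (2 : Cardinal.{0}) ^ c = Order.succ c)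
    (κ : Cardinal.{0}) (hreg : κ.IsRegular) (hunc : ℵ₀ < κ)
    (s : Ordinal.{0} → Cardinal.{0}) (hs : ∀ α < κ.ord, s α < κ) :
    ∃ Γ : Ordinal.{0} → Set Ordinal.{0},
      (∀ α : Ordinal.{0}, #(Γ α) < Cardinal.lift.{1} κ) ∧
      ∀ γ : Cardinal.{0}, κ ≤ γ →
        ∀ α : Ordinal.{0}, α < κ.ord → s α < γ.ord.cof →
          ∀ x : Set Ordinal.{0}, x ⊆ Set.Iio γ.ord →
            #x = Cardinal.lift.{1} (s α) →
            ∃ β : Ordinal.{0}, β < γ.ord ∧ Γ β = x :=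
  statement2_general gch κ hunc s hs
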